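/- arXiv:1704.08799 — 2 statements merged into one kernel-verified Lean document; each statement's English description precedes it below -/
import Mathlib

section
/- Let f(λ) = Σ_{d=0}^{D} a_d λ^{D−d} be a monic polynomial over ℂ and ℓ a positive integer. The multiset of roots of f is invariant under multiplication by e^{i2π/ℓ} if and only if a_d = 0 for all d with ℓ ∤ d. -/
/-!
A monic polynomial over an algebraically closed field is determined by its roots, and
`p.scaleRoots ω` has the roots of `p` multiplied by `ω`; so rotation invariance of the roots
means `f.scaleRoots ω = f`. Comparing coefficients, this says `a_d ω^d = a_d` for all `d`, and for
a primitive `ℓ`-th root of unity `ω^d = 1` exactly when `ℓ ∣ d`.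
-/

namespace Polynomial

variable {R : Type*} [CommRing R] [IsDomain R]

theorem Monic.scaleRoots_eq_self_iff_roots_map_mul {p : R[X]} (hp : p.Monic) (hsplit : p.Splits)
    {r : R} (hr : IsUnit r) : p.scaleRoots r = p ↔ p.roots.map (r * ·) = p.roots := by
  rw [← roots_scaleRoots p hr]
  refine ⟨fun h => by rw [h], fun h => ?_⟩
  rw [(hsplit.scaleRoots r).eq_prod_roots_of_monic ((monic_scaleRoots_iff r).mpr hp), h,
    ← hsplit.eq_prod_roots_of_monic hp]

theorem scaleRoots_eq_self_iff {p : R[X]} {s : R} :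
    p.scaleRoots s = p ↔ ∀ i, p.coeff i ≠ 0 → s ^ (p.natDegree - i) = 1 := by
  simp only [Polynomial.ext_iff, coeff_scaleRoots, mul_right_eq_self₀]
  exact forall_congr' fun i => or_iff_not_imp_right

theorem _root_.IsPrimitiveRoot.scaleRoots_eq_self_iff {ω : R} {ℓ : ℕ} (hω : IsPrimitiveRoot ω ℓ)
    {p : R[X]} :
    p.scaleRoots ω = p ↔ ∀ d ≤ p.natDegree, ¬ ℓ ∣ d → p.coeff (p.natDegree - d) = 0 := by
  simp only [Polynomial.scaleRoots_eq_self_iff, hω.pow_eq_one_iff_dvd]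
  constructor
  · intro h d hd hnd
    by_contra hc
    have := h _ hc
    rw [Nat.sub_sub_self hd] at this
    exact hnd this
  · intro h i hi
    by_contra hnd
    have := h _ (Nat.sub_le _ _) hnd
    rw [Nat.sub_sub_self (le_natDegree_of_ne_zero hi)] at this
    exact hi this

end Polynomial

/-- for a monic polynomial `f(λ) = Σ_{d=0}^{D} a_d λ^{D-d}` over `ℂ` and
`ℓ ≥ 1`, the multiset of roots of `f` is invariant under multiplication by `e^{i2π/ℓ}`
iff `a_d = 0` for all `d` with `ℓ ∤ d`. -/
theorem stmt14 (ℓ : ℕ) (hℓ : 0 < ℓ) (f : Polynomial ℂ) (hf : f.Monic) :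
    (f.roots.map (fun z => Complex.exp (2 * (Real.pi : ℂ) * Complex.I / (ℓ : ℂ)) * z)
        = f.roots) ↔
      ∀ d ≤ f.natDegree, ¬ (ℓ ∣ d) → f.coeff (f.natDegree - d) = 0 := by
  have hω := Complex.isPrimitiveRoot_exp ℓ hℓ.ne'
  rw [← hf.scaleRoots_eq_self_iff_roots_map_mul (IsAlgClosed.splits f) (hω.isUnit hℓ.ne'),
    hω.scaleRoots_eq_self_iff]
end

section
/- Let A be a tensor of order m and dimension n with characteristic polynomial φ_A(λ) = Σ_{d=0}^{D} a_d λ^{D−d}. Then the cyclic index c(A) equals gcd{d : a_d ≠ 0} and also equals gcd{d : Tr_d(A) ≠ 0}, where Tr_d(A) is the sum of d-th powers of all eigenvalues. -/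
open BigOperators

/-- An order-`m`, dimension-`n` real tensor (hypermatrix). -/
abbrev Tensor (m n : ℕ) : Type := (Fin m → Fin n) → ℝ

/-- The primitive rotation `e^{i·2π/k}` of the complex plane. -/
noncomputable def rot (k : ℕ) : ℂ := Complex.exp (2 * (Real.pi : ℂ) * Complex.I / (k : ℂ))

/-- A tensor is nonnegative if all its entries are nonnegative. -/
def Tensor.Nonneg {m n : ℕ} (A : Tensor m n) : Prop := ∀ α, 0 ≤ A α

/-- A tensor is symmetric if its entries are invariant under permutations of indices. -/
def Tensor.Symm {m n : ℕ} (A : Tensor m n) : Prop :=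
  ∀ (σ : Equiv.Perm (Fin m)) (α : Fin m → Fin n), A (α ∘ σ) = A α

/-- Arc `(i,j)` of the digraph associated to `A`: some entry `a_{i i₂ … i_m} ≠ 0`
with `j` among the later indices. -/
def Tensor.Arc {m n : ℕ} [NeZero m] (A : Tensor m n) (i j : Fin n) : Prop :=
  ∃ α : Fin m → Fin n, A α ≠ 0 ∧ α 0 = i ∧ ∃ k : Fin m, k ≠ 0 ∧ α k = j

/-- `A` is weakly irreducible if its associated digraph is strongly connected. -/
def Tensor.WeaklyIrreducible {m n : ℕ} [NeZero m] (A : Tensor m n) : Prop :=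
  ∀ i j : Fin n, Relation.ReflTransGen A.Arc i j

/-- The eigenvalue equations `(A x^{m-1})_i = λ x_i^{m-1}` for all `i`. -/
def Tensor.EigEq {m n : ℕ} [NeZero m] (A : Tensor m n) (lam : ℂ) (x : Fin n → ℂ) : Prop :=
  ∀ i : Fin n,
    (∑ α : Fin m → Fin n,
      if α 0 = i then (A α : ℂ) * ∏ k ∈ Finset.univ.erase (0 : Fin m), x (α k) else 0)
    = lam * x i ^ (m - 1)

/-- `lam` is an eigenvalue of the tensor `A`. -/
def Tensor.IsEig {m n : ℕ} [NeZero m] (A : Tensor m n) (lam : ℂ) : Prop :=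
  ∃ x : Fin n → ℂ, x ≠ 0 ∧ A.EigEq lam x

/-- `A` is spectral `ℓ`-symmetric: its spectrum is invariant under rotation by `e^{i2π/ℓ}`. -/
def Tensor.SpectralSym {m n : ℕ} [NeZero m] (ℓ : ℕ) (A : Tensor m n) : Prop :=
  ∀ lam : ℂ, A.IsEig lam ↔ A.IsEig (rot ℓ * lam)

/-- `A = e^{-iθ} D^{-(m-1)} A D` for the diagonal matrix `D = diag d`, entrywise. -/
def Tensor.DiagSim {m n : ℕ} [NeZero m] (A : Tensor m n) (θ : ℝ) (d : Fin n → ℂ) : Prop :=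
  ∀ α : Fin m → Fin n,
    (A α : ℂ) = Complex.exp (-(θ : ℂ) * Complex.I) * d (α 0) ^ (-((m : ℤ) - 1)) * (A α : ℂ) *
      ∏ k ∈ Finset.univ.erase (0 : Fin m), d (α k)

/-- The set `𝔇^{(j)}` of normalized unimodular diagonal matrices `D` with
`A = e^{-i2πj/ℓ} D^{-(m-1)} A D`. -/
def Tensor.DSet {m n : ℕ} [NeZero m] [NeZero n] (A : Tensor m n) (ℓ j : ℕ) :
    Set (Fin n → ℂ) :=
  {d | d 0 = 1 ∧ (∀ i, ‖d i‖ = 1) ∧ A.DiagSim (2 * Real.pi * j / ℓ) d}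

/-- The set `𝔇 = ⋃_{j=0}^{ℓ-1} 𝔇^{(j)}`. -/
def Tensor.DFull {m n : ℕ} [NeZero m] [NeZero n] (A : Tensor m n) (ℓ : ℕ) :
    Set (Fin n → ℂ) :=
  ⋃ j ∈ Finset.range ℓ, A.DSet ℓ j

/-- An `m`-uniform hypergraph on vertex set `Fin n`. -/
structure TensorHypergraph (m n : ℕ) where
  edges : Finset (Finset (Fin n))
  uniform : ∀ e ∈ edges, e.card = m

/-- The adjacency tensor of an `m`-uniform hypergraph. -/
noncomputable def TensorHypergraph.adjTensor {m n : ℕ} (G : TensorHypergraph m n) : Tensor m n :=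
  fun α => if Finset.image α Finset.univ ∈ G.edges then (1 : ℝ) / (m - 1).factorial else 0

/-- A hypergraph is connected if every two vertices are joined by a walk. -/
def TensorHypergraph.Connected {m n : ℕ} (G : TensorHypergraph m n) : Prop :=
  ∀ i j : Fin n, Relation.ReflTransGen (fun u v => ∃ e ∈ G.edges, u ∈ e ∧ v ∈ e) i j

/-!
Rotating a multiset `s` by `ω` multiplies its elementary symmetric function `e_d` and its power
sum `p_d` by `ω ^ d`. For a primitive `k`-th root of unity `ω`, invariance of `s` therefore forces
`k ∣ d` whenever `e_d ≠ 0` or `p_d ≠ 0`; conversely, if `k` divides every such `d` for the `e_d`,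
then `∏ (X - ω r) = ∏ (X - r)` and `s` is invariant. So the admissible rotation orders are the
positive common divisors of `{d | e_d ≠ 0}`, and the largest of them is their gcd. The
coefficients of `χ` are `± e_d`, and Newton's identities `d e_d = ± ∑ ± e_i p_{d-i}` show, by
induction on `d`, that a common divisor of `{d > 0 | p_d ≠ 0}` divides `{d | e_d ≠ 0}`.
-/

theorem Nat.dvd_of_isGreatest_of_forall_dvd {P : ℕ → Prop} {c e : ℕ}
    (hc : IsGreatest {k | 0 < k ∧ ∀ d, P d → k ∣ d} c) (he : ∀ d, P d → e ∣ d) : e ∣ c := by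
  rcases Nat.eq_zero_or_pos e with rfl | hepos
  · have : c + 1 ≤ c :=
      hc.2 ⟨c.succ_pos, fun d hd => Nat.eq_zero_of_zero_dvd (he d hd) ▸ dvd_zero _⟩
    omega
  · have hpos : 0 < Nat.lcm e c := Nat.lcm_pos hepos hc.1.1
    have hle : Nat.lcm e c ≤ c := hc.2 ⟨hpos, fun d hd => Nat.lcm_dvd (he d hd) (hc.1.2 d hd)⟩
    have heq : Nat.lcm e c = c := le_antisymm hle (Nat.le_of_dvd hpos (Nat.dvd_lcm_right e c))
    exact heq ▸ Nat.dvd_lcm_left e c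

namespace Multiset

open Polynomial

variable {K : Type*} [CommRing K]

theorem esymm_map_mul (ω : K) (s : Multiset K) (d : ℕ) :
    (s.map (ω * ·)).esymm d = ω ^ d * s.esymm d := by
  simpa only [smul_eq_mul] using (pow_smul_esymm ω d s).symm

theorem sum_map_pow_map_mul (ω : K) (s : Multiset K) (d : ℕ) :
    ((s.map (ω * ·)).map (· ^ d)).sum = ω ^ d * (s.map (· ^ d)).sum := by
  simp only [map_map, Function.comp_def, mul_pow, sum_map_mul_left]

theorem esymm_eq_zero_of_card_lt {s : Multiset K} {d : ℕ} (h : card s < d) : s.esymm d = 0 := by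
  simp [esymm, powersetCard_eq_empty _ h]

theorem mul_esymm_eq_sum (s : Multiset K) (k : ℕ) :
    k * s.esymm k = (-1) ^ (k + 1) * ∑ a ∈ Finset.HasAntidiagonal.antidiagonal k with a.1 < k,
      (-1) ^ a.1 * s.esymm a.1 * (s.map (· ^ a.2)).sum := by
  classical
  have hpsum (j : ℕ) : ∑ x : s, (x : K) ^ j = (s.map (· ^ j)).sum :=
    congrArg sum (map_univ s (· ^ j))
  have h := congrArg (MvPolynomial.aeval fun x : s => (x : K)) (MvPolynomial.mul_esymm_eq_sum s K k)
  simpa only [map_mul, map_pow, map_neg, map_one, map_natCast, map_sum,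
    MvPolynomial.aeval_esymm_eq_multiset_esymm, MvPolynomial.psum, MvPolynomial.aeval_X,
    map_univ_coe, hpsum] using h

variable [IsDomain K]

theorem map_mul_eq_self_iff {ω : K} {k : ℕ} (hω : IsPrimitiveRoot ω k) (s : Multiset K) :
    s.map (ω * ·) = s ↔ ∀ d, s.esymm d ≠ 0 → k ∣ d := by
  constructor
  · intro hs d hd
    have h := esymm_map_mul ω s d
    rw [hs] at h
    exact (hω.pow_eq_one_iff_dvd d).mp ((mul_left_eq_self₀.mp h.symm).resolve_right hd)
  · intro h
    have hesymm : ∀ d, (s.map (ω * ·)).esymm d = s.esymm d := fun d => by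
      rw [esymm_map_mul]
      by_cases hd : s.esymm d = 0
      · rw [hd, mul_zero]
      · rw [(hω.pow_eq_one_iff_dvd d).mpr (h d hd), one_mul]
    have hprod : ((s.map (ω * ·)).map (X - C ·)).prod = (s.map (X - C ·)).prod := by
      simp only [prod_X_sub_X_eq_sum_esymm, card_map, hesymm]
    simpa only [roots_multiset_prod_X_sub_C] using congrArg roots hprod

theorem dvd_of_sum_map_pow_ne_zero {ω : K} {k d : ℕ} (hω : IsPrimitiveRoot ω k)
    {s : Multiset K} (hs : s.map (ω * ·) = s) (hd : (s.map (· ^ d)).sum ≠ 0) : k ∣ d := by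
  have h := sum_map_pow_map_mul ω s d
  rw [hs] at h
  exact (hω.pow_eq_one_iff_dvd d).mp ((mul_left_eq_self₀.mp h.symm).resolve_right hd)

theorem dvd_of_esymm_ne_zero [CharZero K] {s : Multiset K} {e : ℕ}
    (h : ∀ d, 0 < d → (s.map (· ^ d)).sum ≠ 0 → e ∣ d) (d : ℕ) (hd : s.esymm d ≠ 0) :
    e ∣ d := by
  induction d using Nat.strong_induction_on with
  | _ d ih =>
  rcases Nat.eq_zero_or_pos d with rfl | hpos
  · exact dvd_zero e
  by_contra hnd
  have hsum : ∑ a ∈ Finset.HasAntidiagonal.antidiagonal d with a.1 < d,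
      (-1) ^ a.1 * s.esymm a.1 * (s.map (· ^ a.2)).sum = 0 := by
    refine Finset.sum_eq_zero fun a ha => ?_
    obtain ⟨hadd, hlt⟩ : a.1 + a.2 = d ∧ a.1 < d := by simpa using ha
    by_contra hne
    have he : s.esymm a.1 ≠ 0 := fun h0 => hne (by rw [h0, mul_zero, zero_mul])
    have hp : (s.map (· ^ a.2)).sum ≠ 0 := fun h0 => hne (by rw [h0, mul_zero])
    exact hnd (hadd ▸ dvd_add (ih a.1 hlt he) (h a.2 (by omega) hp))
  have hnewton := mul_esymm_eq_sum s d
  rw [hsum, mul_zero] at hnewton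
  exact hd ((mul_eq_zero.mp hnewton).resolve_left (Nat.cast_ne_zero.mpr hpos.ne'))

end Multiset

namespace Polynomial

variable {K : Type*} [Field K] {p : K[X]}

theorem coeff_natDegree_sub_ne_zero_iff (hp : p ≠ 0) (hsplit : p.Splits) {d : ℕ}
    (hd : d ≤ p.natDegree) : p.coeff (p.natDegree - d) ≠ 0 ↔ p.roots.esymm d ≠ 0 := by
  rw [coeff_eq_esymm_roots_of_splits hsplit (Nat.sub_le _ _), Nat.sub_sub_self hd]
  simp [hp]

theorem forall_coeff_ne_zero_dvd_iff (hp : p ≠ 0) (hsplit : p.Splits) (e : ℕ) :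
    (∀ d, 0 < d → d ≤ p.natDegree → p.coeff (p.natDegree - d) ≠ 0 → e ∣ d) ↔
      ∀ d, p.roots.esymm d ≠ 0 → e ∣ d := by
  constructor
  · intro h d hd
    rcases Nat.eq_zero_or_pos d with rfl | hpos
    · exact dvd_zero e
    have hdeg : d ≤ p.natDegree := by
      by_contra! hlt
      exact hd (Multiset.esymm_eq_zero_of_card_lt (splits_iff_card_roots.mp hsplit ▸ hlt))
    exact h d hpos hdeg ((coeff_natDegree_sub_ne_zero_iff hp hsplit hdeg).mpr hd)
  · intro h d _ hdeg hd
    exact h d ((coeff_natDegree_sub_ne_zero_iff hp hsplit hdeg).mp hd)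

end Polynomial

theorem isPrimitiveRoot_rot {k : ℕ} (hk : k ≠ 0) : IsPrimitiveRoot (rot k) k :=
  Complex.isPrimitiveRoot_exp k hk

theorem stmt16_general {c : ℕ}
    (χ : Polynomial ℂ) (hmon : χ.Monic)
    (hc : IsGreatest {k : ℕ | 0 < k ∧ χ.roots.map (fun z => rot k * z) = χ.roots} c) :
    ((∀ d : ℕ, 0 < d → d ≤ χ.natDegree → χ.coeff (χ.natDegree - d) ≠ 0 → c ∣ d) ∧
      (∀ e : ℕ, (∀ d : ℕ, 0 < d → d ≤ χ.natDegree → χ.coeff (χ.natDegree - d) ≠ 0 → e ∣ d)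
        → e ∣ c)) ∧
    ((∀ d : ℕ, 0 < d → (χ.roots.map (fun z => z ^ d)).sum ≠ 0 → c ∣ d) ∧
      (∀ e : ℕ, (∀ d : ℕ, 0 < d → (χ.roots.map (fun z => z ^ d)).sum ≠ 0 → e ∣ d)
        → e ∣ c)) := by
  have hS : {k : ℕ | 0 < k ∧ χ.roots.map (fun z => rot k * z) = χ.roots} =
      {k | 0 < k ∧ ∀ d, χ.roots.esymm d ≠ 0 → k ∣ d} := by
    ext k
    exact and_congr_right fun hk => Multiset.map_mul_eq_self_iff (isPrimitiveRoot_rot hk.ne') _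
  have hc' := hS ▸ hc
  have hcoeff := Polynomial.forall_coeff_ne_zero_dvd_iff hmon.ne_zero (IsAlgClosed.splits χ)
  refine ⟨⟨(hcoeff c).mpr hc'.1.2, fun e he => ?_⟩, ⟨fun d _ hd => ?_, fun e he => ?_⟩⟩
  · exact Nat.dvd_of_isGreatest_of_forall_dvd hc' ((hcoeff e).mp he)
  · exact Multiset.dvd_of_sum_map_pow_ne_zero (isPrimitiveRoot_rot hc.1.1.ne') hc.1.2 hd
  · exact Nat.dvd_of_isGreatest_of_forall_dvd hc' (Multiset.dvd_of_esymm_ne_zero he)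

/-- with `χ` the characteristic polynomial of `A` (monic, degree
`D = n(m-1)^{n-1}`, roots = eigenvalues, at least one nonzero), the cyclic index `c`
(the greatest `k` such that the spectrum is invariant under rotation by `e^{i2π/k}`)
equals `gcd{d : a_d ≠ 0}` and also `gcd{d : Tr_d(A) ≠ 0}`; the gcds are expressed by
their universal property. -/
theorem stmt16 {m n c : ℕ} [NeZero m] [NeZero n] (A : Tensor m n)
    (χ : Polynomial ℂ) (hmon : χ.Monic)
    (hdeg : χ.natDegree = n * (m - 1) ^ (n - 1))
    (hroots : ∀ lam : ℂ, lam ∈ χ.roots ↔ A.IsEig lam)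
    (hnz : ∃ z ∈ χ.roots, z ≠ 0)
    (hc : IsGreatest {k : ℕ | 0 < k ∧ χ.roots.map (fun z => rot k * z) = χ.roots} c) :
    ((∀ d : ℕ, 0 < d → d ≤ χ.natDegree → χ.coeff (χ.natDegree - d) ≠ 0 → c ∣ d) ∧
      (∀ e : ℕ, (∀ d : ℕ, 0 < d → d ≤ χ.natDegree → χ.coeff (χ.natDegree - d) ≠ 0 → e ∣ d)
        → e ∣ c)) ∧
    ((∀ d : ℕ, 0 < d → (χ.roots.map (fun z => z ^ d)).sum ≠ 0 → c ∣ d) ∧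
      (∀ e : ℕ, (∀ d : ℕ, 0 < d → (χ.roots.map (fun z => z ^ d)).sum ≠ 0 → e ∣ d)
        → e ∣ c)) :=
  stmt16_general χ hmon hc
end
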